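/- Let π be the density of a weakly structurally Markov graph law with full support on decomposable graphs on V, and let S ⊆ V with |S| ≤ |V| − 2. Then the ratio π(G⟨R_1,R_2⟩) / (π(G⟨R_1⟩) π(G⟨R_2⟩)) takes the same value for all pairs R_1, R_2 ⊆ V with R_1 ∩ R_2 = S, R_1 ⊋ S, and R_2 ⊋ S. -/

import Mathlib

open scoped Classical BigOperators

/-- A graph is decomposable (chordal) if it has no induced cycle of length at least 4. -/
def Chordal {V : Type*} (G : SimpleGraph V) : Prop :=
  ¬ ∃ (n : ℕ) (f : ZMod n ↪ V), 4 ≤ n ∧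
      ∀ i j : ZMod n, G.Adj (f i) (f j) ↔ (i = j + 1 ∨ j = i + 1)

/-- `C` is a maximal clique (a "clique" in the terminology of the paper) of `G`. -/
def MaxClique {V : Type*} (G : SimpleGraph V) (C : Set V) : Prop :=
  G.IsClique C ∧ ∀ D, G.IsClique D → C ⊆ D → C = D

/-- `C` is a maximal complete subset of the subgraph of `G` induced on `A`,
i.e. a clique of `G_A`. -/
def MaxCliqueIn {V : Type*} (G : SimpleGraph V) (A C : Set V) : Prop :=
  C ⊆ A ∧ G.IsClique C ∧ ∀ D, D ⊆ A → G.IsClique D → C ⊆ D → C = D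

/-- `(A,B)` is a decomposition of `G`: it covers the vertex set, `A ∩ B` is complete
and `A ∩ B` separates `A \ B` from `B \ A`. -/
def IsDecomposition {V : Type*} (G : SimpleGraph V) (A B : Set V) : Prop :=
  A ∪ B = Set.univ ∧ G.IsClique (A ∩ B) ∧
    ∀ u ∈ A \ B, ∀ v ∈ B \ A, ∀ p : G.Walk u v, ∃ w ∈ A ∩ B, w ∈ p.support

/-- The graph `G⟨A₁,…,A_k⟩` on `V` that is complete on each member of `𝒜` and
has no other edges. -/
def coverGraph {V : Type*} (𝒜 : Set (Set V)) : SimpleGraph V where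
  Adj u v := u ≠ v ∧ ∃ A ∈ 𝒜, u ∈ A ∧ v ∈ A
  symm := by
    constructor
    rintro u v ⟨huv, A, hA, hu, hv⟩
    exact ⟨huv.symm, A, hA, hv, hu⟩
  loopless := by constructor; rintro v ⟨hv, -⟩; exact hv rfl

/-- Total mass that the density `π` puts on a set of graphs. -/
noncomputable def mass {V : Type*} (π : SimpleGraph V → ℝ) (S : Set (SimpleGraph V)) : ℝ :=
  ∑ᶠ G ∈ S, π G

/-- `𝔘*(A,B)`: decomposable graphs for which `(A,B)` is a decomposition and
`A ∩ B` is a clique (maximal complete subgraph) of `G_A`. -/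
def Ustar {V : Type*} (A B : Set V) : Set (SimpleGraph V) :=
  {G | Chordal G ∧ IsDecomposition G A B ∧ MaxCliqueIn G A (A ∩ B)}

/-- The weak structural Markov property: for every covering pair `(A,B)`,
the induced subgraphs `G_A` and `G_B` are independent conditionally on
`G ∈ 𝔘*(A,B)`. -/
def WeaklyStructurallyMarkov {V : Type*} (π : SimpleGraph V → ℝ) : Prop :=
  ∀ A B : Set V, A ∪ B = Set.univ →
    ∀ H₁ ∈ Ustar A B, ∀ H₂ ∈ Ustar A B,
      mass π {G ∈ Ustar A B |
            G.induce A = H₁.induce A ∧ G.induce B = H₂.induce B} *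
          mass π (Ustar A B) =
        mass π {G ∈ Ustar A B | G.induce A = H₁.induce A} *
          mass π {G ∈ Ustar A B | G.induce B = H₂.induce B}

/-- `π` is the density of a graph law on the set of decomposable graphs on `V`. -/
def IsGraphLaw {V : Type*} [Fintype V] (π : SimpleGraph V → ℝ) : Prop :=
  (∀ G, 0 ≤ π G) ∧ (∀ G, ¬ Chordal G → π G = 0) ∧ ∑ᶠ G : SimpleGraph V, π G = 1

/-- `π` has full support on the decomposable graphs. -/
def FullSupport {V : Type*} (π : SimpleGraph V → ℝ) : Prop :=
  ∀ G, Chordal G → 0 < π G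

/-- A junction tree for `G`: a tree on the maximal cliques of `G` such that the
cliques containing any fixed vertex form a connected subtree. -/
structure JunctionTree {V : Type*} (G : SimpleGraph V) where
  J : ℕ
  clique : Fin J → Set V
  clique_inj : Function.Injective clique
  clique_max : ∀ i, MaxClique G (clique i)
  clique_surj : ∀ C, MaxClique G C → ∃ i, clique i = C
  T : SimpleGraph (Fin J)
  isTree : T.IsTree
  junction : ∀ v : V, ((T.induce {i | v ∈ clique i}).Connected)

/-- The separator associated with an (unordered) edge of a junction tree. -/
def JunctionTree.sep {V : Type*} {G : SimpleGraph V} (JT : JunctionTree G) :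
    Sym2 (Fin JT.J) → Set V :=
  Sym2.lift ⟨fun i j => JT.clique i ∩ JT.clique j, fun i j => Set.inter_comm _ _⟩

/-- `π` is a clique–separator factorisation law: its density is proportional to
`∏_C φ_C / ∏_S ψ_S` over the cliques and separators of `G`. -/
def IsCSFLaw {V : Type*} (π : SimpleGraph V → ℝ) : Prop :=
  ∃ (φ ψ : Set V → ℝ) (c : ℝ), (∀ A, 0 < φ A) ∧ (∀ A, 0 < ψ A) ∧ 0 < c ∧
    ∀ G : SimpleGraph V, Chordal G → ∀ JT : JunctionTree G,
      π G = c * (∏ i : Fin JT.J, φ (JT.clique i)) /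
        ∏ᶠ e ∈ JT.T.edgeSet, ψ (JT.sep e)

/-- The union of the cliques visited before step `j`. -/
def priorUnion {V : Type*} {J : ℕ} (f : Fin J → Set V) (j : Fin J) : Set V :=
  ⋃ i ∈ {i : Fin J | i < j}, f i

/-- `f` is a pluperfect ordering of the (maximal) cliques of `G`: at each step the
clique chosen is available and its separator is not a proper subset of the
separator of any other available clique. -/
def PluperfectOrdering {V : Type*} (G : SimpleGraph V) {J : ℕ} (f : Fin J → Set V) : Prop :=
  Function.Injective f ∧ (∀ i, MaxClique G (f i)) ∧ (∀ C, MaxClique G C → ∃ i, f i = C) ∧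
  ∀ j : Fin J, (j : ℕ) ≠ 0 →
    (∃ i < j, f j ∩ priorUnion f j ⊆ f i) ∧
    ∀ k : Fin J, j ≤ k → (∃ i < j, f k ∩ priorUnion f j ⊆ f i) →
      ¬ f j ∩ priorUnion f j ⊂ f k ∩ priorUnion f j

/-!
Given `R₁ ∩ R₂ ⊂ T ⊆ R₂`, put `A = R₂ᶜ ∪ T` and `B = R₂`, so that `A ∩ B = T`. The graphs
`G⟨R₁,R₂⟩`, `G⟨R₁,T⟩`, `G⟨R₂⟩`, `G⟨T⟩` all lie in `𝔘*(A,B)`; the first two agree on `A`, as do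
the last two, while on `B` the first agrees with the third and the second with the fourth. A graph
in `𝔘*(A,B)` is determined by its restrictions to `A` and `B`, so the weak structural Markov
identity for these four pairs of marginals, cross-multiplied, gives
`π(G⟨R₁,R₂⟩) π(G⟨T⟩) = π(G⟨R₁,T⟩) π(G⟨R₂⟩)`: the ratio is unchanged when `R₂` shrinks to `T`.
Growing `R₂` to `R₂ ∪ R₂'` and shrinking it to `R₂'` then replaces either side by any other set
meeting the opposite side in `S`. This reduces every pair to one of the form
`(S ∪ {a}, S ∪ {b})`, and any two such pairs are connected by moves of this kind and a swap.
-/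

section

variable {V : Type*}

theorem chordal_of_forall_adj_or_adj {G : SimpleGraph V}
    (h : ∀ a b c d, G.Adj a b → G.Adj b c → G.Adj c d → a ≠ c → b ≠ d → G.Adj a c ∨ G.Adj b d) :
    Chordal G := by
  rintro ⟨n, f, hn, hadj⟩
  have hne : ∀ k : ℕ, 0 < k → k < n → (k : ZMod n) ≠ 0 := fun k hk hkn hzero =>
    absurd (Nat.le_of_dvd hk ((ZMod.natCast_eq_zero_iff k n).1 hzero)) (by omega)
  have h1 : (1 : ZMod n) ≠ 0 := by exact_mod_cast hne 1 (by omega) (by omega)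
  have h2 : (2 : ZMod n) ≠ 0 := by exact_mod_cast hne 2 (by omega) (by omega)
  have h3 : (3 : ZMod n) ≠ 0 := by exact_mod_cast hne 3 (by omega) (by omega)
  have adj : ∀ i : ZMod n, G.Adj (f i) (f (i + 1)) := fun i => (hadj _ _).2 (.inr rfl)
  rcases h (f 0) (f 1) (f 2) (f 3) (by simpa using adj 0)
    (by simpa [one_add_one_eq_two] using adj 1) (by simpa [two_add_one_eq_three] using adj 2)
    (fun e => h2 (f.injective e).symm)
    (fun e => h2 (by linear_combination (f.injective e).symm)) with hac | hbd
  · rcases (hadj _ _).1 hac with e | e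
    · exact h3 (by linear_combination -e)
    · exact h1 (by linear_combination e)
  · rcases (hadj _ _).1 hbd with e | e
    · exact h3 (by linear_combination -e)
    · exact h1 (by linear_combination e)

theorem coverGraph_pair_adj_or_adj {P Q : Set V} {a b c d : V}
    (hab : (coverGraph {P, Q}).Adj a b) (hbc : (coverGraph {P, Q}).Adj b c)
    (hcd : (coverGraph {P, Q}).Adj c d) (hac : a ≠ c) (hbd : b ≠ d) :
    (coverGraph {P, Q}).Adj a c ∨ (coverGraph {P, Q}).Adj b d := by
  obtain ⟨-, C₀, hC₀, ha, hb⟩ := hab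
  obtain ⟨-, C₁, hC₁, hb', hc⟩ := hbc
  obtain ⟨-, C₂, hC₂, hc', hd⟩ := hcd
  have : C₀ = C₁ ∨ C₁ = C₂ ∨ C₀ = C₂ := by
    simp only [Set.mem_insert_iff, Set.mem_singleton_iff] at hC₀ hC₁ hC₂
    grind
  rcases this with rfl | rfl | rfl
  · exact .inl ⟨hac, C₀, hC₀, ha, hc⟩
  · exact .inr ⟨hbd, C₁, hC₁, hb', hd⟩
  · exact .inl ⟨hac, C₀, hC₀, ha, hc'⟩

theorem chordal_coverGraph_pair (P Q : Set V) : Chordal (coverGraph {P, Q}) :=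
  chordal_of_forall_adj_or_adj fun _ _ _ _ => coverGraph_pair_adj_or_adj

theorem chordal_coverGraph_singleton (P : Set V) : Chordal (coverGraph {P}) := by
  simpa using chordal_coverGraph_pair P P

theorem coverGraph_isClique {𝒜 : Set (Set V)} {C D : Set V} (hD : D ∈ 𝒜) (hCD : C ⊆ D) :
    (coverGraph 𝒜).IsClique C :=
  fun _ hu _ hv huv => ⟨huv, D, hD, hCD hu, hCD hv⟩

theorem isDecomposition_coverGraph {𝒜 : Set (Set V)} {A B : Set V} (hAB : A ∪ B = Set.univ)
    (hclique : (coverGraph 𝒜).IsClique (A ∩ B)) (hsplit : ∀ C ∈ 𝒜, C ⊆ A ∨ C ⊆ B) :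
    IsDecomposition (coverGraph 𝒜) A B := by
  refine ⟨hAB, hclique, fun u hu v hv p => ?_⟩
  obtain ⟨d, hd, hA, hnA⟩ := p.exists_boundary_dart A hu.1 hv.2
  obtain ⟨-, C, hC, h₁, h₂⟩ := d.adj
  have hCB : C ⊆ B := (hsplit C hC).resolve_left fun hCA => hnA (hCA h₂)
  exact ⟨d.fst, ⟨hA, hCB h₁⟩, p.dart_fst_mem_support_of_mem_darts hd⟩

theorem maxCliqueIn_coverGraph {𝒜 : Set (Set V)} {A B : Set V} {b : V}
    (hclique : (coverGraph 𝒜).IsClique (A ∩ B)) (hb : b ∈ A ∩ B)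
    (hmax : ∀ C ∈ 𝒜, b ∈ C → C ⊆ B) :
    MaxCliqueIn (coverGraph 𝒜) A (A ∩ B) := by
  refine ⟨Set.inter_subset_left, hclique, fun D hDA hD hsub => hsub.antisymm fun x hx => ?_⟩
  obtain rfl | hxb := eq_or_ne x b
  · exact hb
  · obtain ⟨-, C, hC, hxC, hbC⟩ := hD hx (hsub hb) hxb
    exact ⟨hDA hx, hmax C hC hbC hxC⟩

theorem coverGraph_mem_Ustar {𝒜 : Set (Set V)} {A B : Set V} {b : V}
    (hchordal : Chordal (coverGraph 𝒜)) (hAB : A ∪ B = Set.univ)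
    (hsplit : ∀ C ∈ 𝒜, C ⊆ A ∨ C ⊆ B) (hcover : ∃ C ∈ 𝒜, A ∩ B ⊆ C) (hb : b ∈ A ∩ B)
    (hmax : ∀ C ∈ 𝒜, b ∈ C → C ⊆ B) :
    coverGraph 𝒜 ∈ Ustar A B := by
  obtain ⟨C, hC, hABC⟩ := hcover
  have hclique := coverGraph_isClique hC hABC
  exact ⟨hchordal, isDecomposition_coverGraph hAB hclique hsplit,
    maxCliqueIn_coverGraph hclique hb hmax⟩

theorem coverGraph_induce_le {𝒜 𝒟 : Set (Set V)} {A : Set V}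
    (h : ∀ C ∈ 𝒜, ∃ D ∈ 𝒟, C ∩ A ⊆ D) :
    (coverGraph 𝒜).induce A ≤ (coverGraph 𝒟).induce A := by
  rintro ⟨u, hu⟩ ⟨v, hv⟩ ⟨huv, C, hC, huC, hvC⟩
  obtain ⟨D, hD, hCD⟩ := h C hC
  exact ⟨huv, D, hD, hCD ⟨huC, hu⟩, hCD ⟨hvC, hv⟩⟩

theorem coverGraph_induce_eq {𝒜 𝒟 : Set (Set V)} {A : Set V}
    (h₁ : ∀ C ∈ 𝒜, ∃ D ∈ 𝒟, C ∩ A ⊆ D) (h₂ : ∀ D ∈ 𝒟, ∃ C ∈ 𝒜, D ∩ A ⊆ C) :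
    (coverGraph 𝒜).induce A = (coverGraph 𝒟).induce A :=
  le_antisymm (coverGraph_induce_le h₁) (coverGraph_induce_le h₂)

theorem IsDecomposition.not_adj {G : SimpleGraph V} {A B : Set V} (hdec : IsDecomposition G A B)
    {u v : V} (hu : u ∈ A \ B) (hv : v ∈ B \ A) : ¬ G.Adj u v := fun h => by
  obtain ⟨w, hw, hws⟩ := hdec.2.2 u hu v hv (.cons h .nil)
  simp only [SimpleGraph.Walk.support_cons, SimpleGraph.Walk.support_nil, List.mem_cons,
    List.not_mem_nil, or_false] at hws
  rcases hws with rfl | rfl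
  exacts [hu.2 hw.2, hv.2 hw.1]

theorem adj_iff_of_induce_eq {G G' : SimpleGraph V} {A : Set V} (h : G.induce A = G'.induce A)
    {u v : V} (hu : u ∈ A) (hv : v ∈ A) : G.Adj u v ↔ G'.Adj u v := by
  simpa using congrArg (fun H : SimpleGraph A => H.Adj ⟨u, hu⟩ ⟨v, hv⟩) h

theorem IsDecomposition.eq_of_induce_eq {G G' : SimpleGraph V} {A B : Set V}
    (hG : IsDecomposition G A B) (hG' : IsDecomposition G' A B)
    (hA : G.induce A = G'.induce A) (hB : G.induce B = G'.induce B) : G = G' := by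
  have hcover (x : V) : x ∈ A ∨ x ∈ B := by simp [← Set.mem_union, hG.1]
  ext u v
  by_cases hsame : (u ∈ A ∧ v ∈ A) ∨ (u ∈ B ∧ v ∈ B)
  · rcases hsame with ⟨hu, hv⟩ | ⟨hu, hv⟩
    exacts [adj_iff_of_induce_eq hA hu hv, adj_iff_of_induce_eq hB hu hv]
  · have hopp : (u ∈ A \ B ∧ v ∈ B \ A) ∨ (v ∈ A \ B ∧ u ∈ B \ A) := by
      have := hcover u; have := hcover v
      simp only [Set.mem_sdiff]; tauto
    rcases hopp with ⟨hu, hv⟩ | ⟨hv, hu⟩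
    · exact iff_of_false (hG.not_adj hu hv) (hG'.not_adj hu hv)
    · exact iff_of_false (fun h => hG.not_adj hv hu h.symm) (fun h => hG'.not_adj hv hu h.symm)

theorem mass_pos [Finite V] {π : SimpleGraph V → ℝ} (hπ : ∀ G, 0 ≤ π G)
    {s : Set (SimpleGraph V)} {G : SimpleGraph V} (hG : G ∈ s) (hpos : 0 < π G) :
    0 < mass π s := by
  have : Finite (SimpleGraph V) :=
    Finite.of_injective (fun G : SimpleGraph V => G.Adj) fun _ _ => SimpleGraph.ext
  rw [mass, finsum_mem_eq_finite_toFinset_sum π s.toFinite]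
  exact Finset.sum_pos' (fun H _ => hπ H) ⟨G, s.toFinite.mem_toFinset.2 hG, hpos⟩

theorem mass_marginals_eq {π : SimpleGraph V → ℝ} {A B : Set V} {H₁ H₂ G : SimpleGraph V}
    (hG : G ∈ Ustar A B) (h₁ : G.induce A = H₁.induce A) (h₂ : G.induce B = H₂.induce B) :
    mass π {G' ∈ Ustar A B | G'.induce A = H₁.induce A ∧ G'.induce B = H₂.induce B} = π G := by
  have : {G' ∈ Ustar A B | G'.induce A = H₁.induce A ∧ G'.induce B = H₂.induce B} = {G} :=
    Set.eq_singleton_iff_unique_mem.2 ⟨⟨hG, h₁, h₂⟩, fun G' ⟨hG', h₁', h₂'⟩ =>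
      hG'.2.1.eq_of_induce_eq hG.2.1 (h₁'.trans h₁.symm) (h₂'.trans h₂.symm)⟩
  rw [this, mass, finsum_mem_singleton]

theorem WeaklyStructurallyMarkov.mul_eq_mul {π : SimpleGraph V → ℝ}
    (hwsm : WeaklyStructurallyMarkov π) {A B : Set V} (hAB : A ∪ B = Set.univ)
    (hM : mass π (Ustar A B) ≠ 0) {X Y Z W : SimpleGraph V}
    (hX : X ∈ Ustar A B) (hY : Y ∈ Ustar A B) (hZ : Z ∈ Ustar A B) (hW : W ∈ Ustar A B)
    (hXY : X.induce A = Y.induce A) (hZW : Z.induce A = W.induce A)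
    (hXZ : X.induce B = Z.induce B) (hYW : Y.induce B = W.induce B) :
    π X * π W = π Y * π Z := by
  set M := mass π (Ustar A B)
  set a : SimpleGraph V → ℝ := fun H => mass π {G ∈ Ustar A B | G.induce A = H.induce A}
  set b : SimpleGraph V → ℝ := fun H => mass π {G ∈ Ustar A B | G.induce B = H.induce B}
  have eXX : π X * M = a X * b X := by
    simpa only [mass_marginals_eq hX rfl rfl] using hwsm A B hAB X hX X hX
  have eXY : π Y * M = a X * b Y := by
    simpa only [mass_marginals_eq hY hXY.symm rfl] using hwsm A B hAB X hX Y hY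
  have eZX : π Z * M = a Z * b X := by
    simpa only [mass_marginals_eq hZ rfl hXZ.symm] using hwsm A B hAB Z hZ X hX
  have eZY : π W * M = a Z * b Y := by
    simpa only [mass_marginals_eq hW hZW.symm hYW.symm] using hwsm A B hAB Z hZ Y hY
  refine mul_right_cancel₀ (mul_ne_zero hM hM) ?_
  calc π X * π W * (M * M) = (π X * M) * (π W * M) := by ring
    _ = (a X * b Y) * (a Z * b X) := by rw [eXX, eZY]; ring
    _ = π Y * π Z * (M * M) := by rw [← eXY, ← eZX]; ring

theorem mul_eq_mul_of_inter_ssubset [Finite V] {π : SimpleGraph V → ℝ} (hπ : ∀ G, 0 ≤ π G)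
    (hsupp : FullSupport π) (hwsm : WeaklyStructurallyMarkov π) {R₁ R₂ T : Set V}
    (hT : R₁ ∩ R₂ ⊂ T) (hTR₂ : T ⊆ R₂) :
    π (coverGraph {R₁, R₂}) * π (coverGraph {T}) =
      π (coverGraph {R₁, T}) * π (coverGraph {R₂}) := by
  obtain ⟨b, hbT, hb⟩ := Set.exists_of_ssubset hT
  have hbR₁ : b ∉ R₁ := fun h => hb ⟨h, hTR₂ hbT⟩
  set A := R₂ᶜ ∪ T
  have hAB : A ∪ R₂ = Set.univ := by
    rw [Set.union_right_comm, Set.compl_union_self, Set.univ_union]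
  have hABT : A ∩ R₂ = T := by
    rw [Set.union_inter_distrib_right, Set.compl_inter_self, Set.empty_union,
      Set.inter_eq_left.2 hTR₂]
  have hR₁A : R₁ ⊆ A := fun x hx => by
    by_cases hx₂ : x ∈ R₂
    exacts [.inr (hT.subset ⟨hx, hx₂⟩), .inl hx₂]
  have mem : ∀ 𝒜 ⊆ ({R₁, R₂, T} : Set (Set V)), (∃ C ∈ 𝒜, T ⊆ C) → Chordal (coverGraph 𝒜) →
      coverGraph 𝒜 ∈ Ustar A R₂ := by
    intro 𝒜 h𝒜 hcover hchordal
    refine coverGraph_mem_Ustar hchordal hAB ?_ (by rwa [hABT]) (hABT ▸ hbT) ?_ <;>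
      intro C hC <;> rcases h𝒜 hC with rfl | rfl | rfl
    · exact .inl hR₁A
    · exact .inr subset_rfl
    · exact .inr hTR₂
    · exact fun h => absurd h hbR₁
    · exact fun _ => subset_rfl
    · exact fun _ => hTR₂
  have hR₂A : R₂ ∩ A ⊆ T := by rw [Set.inter_comm, hABT]
  have hTA : T ∩ A ⊆ R₂ := Set.inter_subset_left.trans hTR₂
  have hX : coverGraph {R₁, R₂} ∈ Ustar A R₂ :=
    mem _ (by simp [Set.insert_subset_iff]) ⟨R₂, by simp, hTR₂⟩ (chordal_coverGraph_pair _ _)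
  have hY : coverGraph {R₁, T} ∈ Ustar A R₂ :=
    mem _ (by simp [Set.insert_subset_iff]) ⟨T, by simp, subset_rfl⟩ (chordal_coverGraph_pair _ _)
  have hZ : coverGraph {R₂} ∈ Ustar A R₂ :=
    mem _ (by simp) ⟨R₂, rfl, hTR₂⟩ (chordal_coverGraph_singleton _)
  have hW : coverGraph {T} ∈ Ustar A R₂ :=
    mem _ (by simp) ⟨T, rfl, subset_rfl⟩ (chordal_coverGraph_singleton _)
  have hM : mass π (Ustar A R₂) ≠ 0 :=
    (mass_pos hπ hZ (hsupp _ (chordal_coverGraph_singleton R₂))).ne'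
  refine hwsm.mul_eq_mul hAB hM hX hY hZ hW ?_ ?_ ?_ ?_ <;> refine coverGraph_induce_eq ?_ ?_ <;>
    simp only [Set.forall_mem_insert, Set.exists_mem_insert, Set.mem_singleton_iff, forall_eq,
      exists_eq_left]
  · exact ⟨.inl Set.inter_subset_left, .inr hR₂A⟩
  · exact ⟨.inl Set.inter_subset_left, .inr hTA⟩
  · exact hR₂A
  · exact hTA
  · exact ⟨Set.inter_subset_right, Set.inter_subset_left⟩
  · exact .inr Set.inter_subset_left
  · exact ⟨hT.subset, Set.inter_subset_left⟩
  · exact .inr Set.inter_subset_left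

noncomputable def pairRatio (π : SimpleGraph V → ℝ) (R₁ R₂ : Set V) : ℝ :=
  π (coverGraph {R₁, R₂}) / (π (coverGraph {R₁}) * π (coverGraph {R₂}))

theorem pairRatio_comm (π : SimpleGraph V → ℝ) (R₁ R₂ : Set V) :
    pairRatio π R₁ R₂ = pairRatio π R₂ R₁ := by
  rw [pairRatio, pairRatio, Set.pair_comm, mul_comm]

theorem insert_inter_insert_of_ne {S : Set V} {x y : V} (hx : x ∉ S) (hxy : x ≠ y) :
    insert x S ∩ insert y S = S := by
  rw [Set.insert_inter_of_notMem (by simp [hx, hxy]), Set.inter_eq_left.2 (Set.subset_insert _ _)]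

section Markov

variable [Finite V] {π : SimpleGraph V → ℝ}

theorem pairRatio_eq_of_inter_ssubset (hπ : ∀ G, 0 ≤ π G) (hsupp : FullSupport π)
    (hwsm : WeaklyStructurallyMarkov π) {R₁ R₂ T : Set V} (hT : R₁ ∩ R₂ ⊂ T) (hTR₂ : T ⊆ R₂) :
    pairRatio π R₁ T = pairRatio π R₁ R₂ := by
  have pos (P : Set V) : 0 < π (coverGraph {P}) := hsupp _ (chordal_coverGraph_singleton P)
  rw [pairRatio, pairRatio, div_eq_div_iff (mul_pos (pos R₁) (pos T)).ne'
    (mul_pos (pos R₁) (pos R₂)).ne']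
  linear_combination -π (coverGraph {R₁}) * mul_eq_mul_of_inter_ssubset hπ hsupp hwsm hT hTR₂

theorem pairRatio_right_congr (hπ : ∀ G, 0 ≤ π G) (hsupp : FullSupport π)
    (hwsm : WeaklyStructurallyMarkov π) {S R₁ R₂ R₂' : Set V} (h : R₁ ∩ R₂ = S)
    (h' : R₁ ∩ R₂' = S) (hR₂ : S ⊂ R₂) (hR₂' : S ⊂ R₂') :
    pairRatio π R₁ R₂ = pairRatio π R₁ R₂' := by
  have hU : R₁ ∩ (R₂ ∪ R₂') = S := by rw [Set.inter_union_distrib_left, h, h', Set.union_self]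
  exact (pairRatio_eq_of_inter_ssubset hπ hsupp hwsm (hU ▸ hR₂) Set.subset_union_left).trans
    (pairRatio_eq_of_inter_ssubset hπ hsupp hwsm (hU ▸ hR₂') Set.subset_union_right).symm

theorem pairRatio_left_congr (hπ : ∀ G, 0 ≤ π G) (hsupp : FullSupport π)
    (hwsm : WeaklyStructurallyMarkov π) {S R₁ R₁' R₂ : Set V} (h : R₁ ∩ R₂ = S)
    (h' : R₁' ∩ R₂ = S) (hR₁ : S ⊂ R₁) (hR₁' : S ⊂ R₁') :
    pairRatio π R₁ R₂ = pairRatio π R₁' R₂ := by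
  rw [pairRatio_comm, pairRatio_comm π R₁']
  exact pairRatio_right_congr hπ hsupp hwsm (by rwa [Set.inter_comm])
    (by rwa [Set.inter_comm]) hR₁ hR₁'

theorem pairRatio_eq_insert_insert (hπ : ∀ G, 0 ≤ π G) (hsupp : FullSupport π)
    (hwsm : WeaklyStructurallyMarkov π) {S R₁ R₂ : Set V} (h : R₁ ∩ R₂ = S)
    (hR₁ : S ⊂ R₁) (hR₂ : S ⊂ R₂) {a b : V} (ha : a ∈ R₁) (haS : a ∉ S) (hb : b ∈ R₂)
    (hbS : b ∉ S) :
    pairRatio π R₁ R₂ = pairRatio π (insert a S) (insert b S) := by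
  have hbR₁ : b ∉ R₁ := fun hb₁ => hbS (h ▸ ⟨hb₁, hb⟩)
  have hR₁b : R₁ ∩ insert b S = S := by
    rw [Set.inter_insert_of_notMem hbR₁, Set.inter_eq_right.2 hR₁.subset]
  rw [pairRatio_right_congr hπ hsupp hwsm h hR₁b hR₂ (Set.ssubset_insert hbS)]
  exact pairRatio_left_congr hπ hsupp hwsm hR₁b
    (insert_inter_insert_of_ne haS fun hab => hbR₁ (hab ▸ ha)) hR₁ (Set.ssubset_insert haS)

theorem pairRatio_insert_insert (hπ : ∀ G, 0 ≤ π G) (hsupp : FullSupport π)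
    (hwsm : WeaklyStructurallyMarkov π) {S : Set V} {a b a' b' : V} (ha : a ∉ S) (hb : b ∉ S)
    (ha' : a' ∉ S) (hb' : b' ∉ S) (hab : a ≠ b) (hab' : a' ≠ b') :
    pairRatio π (insert a S) (insert b S) = pairRatio π (insert a' S) (insert b' S) := by
  obtain rfl | hab'' := eq_or_ne a b'
  · calc pairRatio π (insert a S) (insert b S) = pairRatio π (insert b S) (insert a S) :=
          pairRatio_comm π _ _
      _ = pairRatio π (insert a' S) (insert a S) :=
          pairRatio_left_congr hπ hsupp hwsm (insert_inter_insert_of_ne hb hab.symm)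
            (insert_inter_insert_of_ne ha' hab') (Set.ssubset_insert hb) (Set.ssubset_insert ha')
  · calc pairRatio π (insert a S) (insert b S) = pairRatio π (insert a S) (insert b' S) :=
          pairRatio_right_congr hπ hsupp hwsm (insert_inter_insert_of_ne ha hab)
            (insert_inter_insert_of_ne ha hab'') (Set.ssubset_insert hb) (Set.ssubset_insert hb')
      _ = pairRatio π (insert a' S) (insert b' S) :=
          pairRatio_left_congr hπ hsupp hwsm (insert_inter_insert_of_ne ha hab'')
            (insert_inter_insert_of_ne ha' hab') (Set.ssubset_insert ha) (Set.ssubset_insert ha')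

end Markov

end

theorem wsm_ratio_depends_only_on_S_general {V : Type*} [Fintype V] (π : SimpleGraph V → ℝ)
    (hlaw : IsGraphLaw π) (hsupp : FullSupport π) (hwsm : WeaklyStructurallyMarkov π)
    (S : Set V) (R₁ R₂ R₁' R₂' : Set V)
    (h12 : R₁ ∩ R₂ = S) (h1 : S ⊂ R₁) (h2 : S ⊂ R₂)
    (h12' : R₁' ∩ R₂' = S) (h1' : S ⊂ R₁') (h2' : S ⊂ R₂') :
    π (coverGraph {R₁, R₂}) / (π (coverGraph {R₁}) * π (coverGraph {R₂})) =
      π (coverGraph {R₁', R₂'}) / (π (coverGraph {R₁'}) * π (coverGraph {R₂'})) := by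
  obtain ⟨a, ha, haS⟩ := Set.exists_of_ssubset h1
  obtain ⟨b, hb, hbS⟩ := Set.exists_of_ssubset h2
  obtain ⟨a', ha', haS'⟩ := Set.exists_of_ssubset h1'
  obtain ⟨b', hb', hbS'⟩ := Set.exists_of_ssubset h2'
  change pairRatio π R₁ R₂ = pairRatio π R₁' R₂'
  rw [pairRatio_eq_insert_insert hlaw.1 hsupp hwsm h12 h1 h2 ha haS hb hbS,
    pairRatio_eq_insert_insert hlaw.1 hsupp hwsm h12' h1' h2' ha' haS' hb' hbS']
  exact pairRatio_insert_insert hlaw.1 hsupp hwsm haS hbS haS' hbS'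
    (fun hab => hbS (h12 ▸ ⟨hab ▸ ha, hb⟩)) (fun hab => hbS' (h12' ▸ ⟨hab ▸ ha', hb'⟩))

/-- for a weakly structurally Markov law with full support and
`|S| ≤ |V| − 2`, the ratio `π(G⟨R₁,R₂⟩)/(π(G⟨R₁⟩)π(G⟨R₂⟩))` depends only on
`S = R₁ ∩ R₂`. -/
theorem wsm_ratio_depends_only_on_S {V : Type*} [Fintype V] (π : SimpleGraph V → ℝ)
    (hlaw : IsGraphLaw π) (hsupp : FullSupport π) (hwsm : WeaklyStructurallyMarkov π)
    (S : Set V) (hS : S.ncard ≤ Fintype.card V - 2)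
    (R₁ R₂ R₁' R₂' : Set V)
    (h12 : R₁ ∩ R₂ = S) (h1 : S ⊂ R₁) (h2 : S ⊂ R₂)
    (h12' : R₁' ∩ R₂' = S) (h1' : S ⊂ R₁') (h2' : S ⊂ R₂') :
    π (coverGraph {R₁, R₂}) / (π (coverGraph {R₁}) * π (coverGraph {R₂})) =
      π (coverGraph {R₁', R₂'}) / (π (coverGraph {R₁'}) * π (coverGraph {R₂'})) :=
  wsm_ratio_depends_only_on_S_general π hlaw hsupp hwsm S R₁ R₂ R₁' R₂' h12 h1 h2 h12' h1' h2'
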